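/- Let G and H be inverse semigroups and π: G → H a map. Then π is a partial homomorphism if and only if for all s,t ∈ G: (i) π(s*)=π(s)*, (ii) π(s)π(t) ≤ π(st), and (iii) s ≤ t implies π(s) ≤ π(t), where ≤ denotes the natural partial order on the inverse semigroups (x ≤ y iff x = y e for some idempotent e). -/
import Mathlib


universe u v

/-- An inverse semigroup: every element has a unique generalized inverse. -/
class InverseSemigroup (G : Type u) extends Semigroup G, Star G where
  mul_star_mul_self : ∀ s : G, s * star s * s = s
  star_mul_self_star : ∀ s : G, star s * s * star s = star s
  star_unique : ∀ s t : G, s * t * s = s → t * s * t = t → t = star s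

variable (G : Type u) [InverseSemigroup G]

/-- The defining relations of the prefix expansion S(G). -/
inductive ExpRel : FreeSemigroup G → FreeSemigroup G → Prop
  | rel1 (s t : G) : ExpRel (.of s * .of t * .of (star t)) (.of (s * t) * .of (star t))
  | rel2 (s t : G) : ExpRel (.of (star s) * .of s * .of t) (.of (star s) * .of (s * t))
  | rel3 (s : G) : ExpRel (.of s * .of (star s) * .of s) (.of s)

/-- The congruence generated by the defining relations. -/
def expCon : Con (FreeSemigroup G) := conGen (ExpRel G)

/-- The prefix expansion S(G) of the inverse semigroup G. -/
def SG : Type u := (expCon G).Quotient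

instance : Semigroup (SG G) := Con.semigroup (expCon G)

variable {G}

/-- The canonical generator [s] of S(G). -/
def gen (s : G) : SG G := ((FreeSemigroup.of s : FreeSemigroup G) : (expCon G).Quotient)

/-- ε_s = [s][s*] in S(G). -/
def eps (s : G) : SG G := gen s * gen (star s)

/-- ε_{s₁}⋯ε_{s_n}·x for a list [s₁,…,s_n]. -/
def epsList (l : List G) (x : SG G) : SG G := (l.map eps).foldr (· * ·) x

/-- ε_A · x for a finite set A ⊆ G. -/
noncomputable def epsSet (A : Finset G) (x : SG G) : SG G := epsList A.toList x

/-- The normal form condition on the pair (A, t). -/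
def IsNormalForm (A : Finset G) (t : G) : Prop :=
  t ∈ A ∧ t * star t ∈ A ∧ ∀ a ∈ A, a * star a = t * star t

/-- A partial homomorphism from an inverse semigroup to a semigroup. -/
structure IsPartialHom {H : Type v} [Semigroup H] (π : G → H) : Prop where
  rel1 : ∀ s t : G, π s * π t * π (star t) = π (s * t) * π (star t)
  rel2 : ∀ s t : G, π (star s) * π s * π t = π (star s) * π (s * t)
  rel3 : ∀ s : G, π s * π (star s) * π s = π s

/-- The natural partial order: x ≤ y iff x = y·e for some idempotent e. -/
def natLE {H : Type v} [Semigroup H] (x y : H) : Prop := ∃ e : H, e * e = e ∧ x = y * e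

/-- A filter in an inverse semigroup. -/
def IsFilter (ξ : Set G) : Prop :=
  ξ.Nonempty ∧ ∀ e s : G, e * e = e → (e * s ∈ ξ ↔ e ∈ ξ ∧ s ∈ ξ)

namespace ISAux

variable {K : Type u} [InverseSemigroup K]

lemma sss (s : K) : s * star s * s = s := InverseSemigroup.mul_star_mul_self s
lemma tst (s : K) : star s * s * star s = star s := InverseSemigroup.star_mul_self_star s

lemma star_star (s : K) : star (star s) = s :=
  (InverseSemigroup.star_unique (star s) s (tst s) (sss s)).symm

lemma idem_ss (s : K) : (s * star s) * (s * star s) = s * star s := by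
  rw [mul_assoc, ← mul_assoc (star s), tst]

lemma idem_ts (s : K) : (star s * s) * (star s * s) = star s * s := by
  have h := idem_ss (star s); rwa [ISAux.star_star] at h

lemma star_idem {e : K} (he : e * e = e) : star e = e := by
  have h : e * e * e = e := by rw [he, he]
  exact (InverseSemigroup.star_unique e e h h).symm

lemma idem_mul_idem {e f : K} (he : e * e = e) (hf : f * f = f) :
    (e * f) * (e * f) = e * f := by
  set x := star (e * f) with hx
  have he' : ∀ z : K, e * (e * z) = e * z := fun z => by rw [← mul_assoc, he]
  have hf' : ∀ z : K, f * (f * z) = f * z := fun z => by rw [← mul_assoc, hf]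
  have h1 : (e * f) * (f * (x * e)) * (e * f) = e * f := by
    have h := sss (e * f)
    rw [← hx] at h
    simp only [mul_assoc] at h ⊢
    simp only [hf', he']
    exact h
  have hp : ∀ z : K, x * (e * (f * (x * z))) = x * z := fun z => by
    have h := congrArg (· * z) (tst (e * f))
    rw [← hx] at h
    simp only [mul_assoc] at h
    exact h
  have h2 : (f * (x * e)) * (e * f) * (f * (x * e)) = f * (x * e) := by
    simp only [mul_assoc]
    simp only [hf', he']
    rw [hp]
  have h3 : f * (x * e) = x := InverseSemigroup.star_unique (e * f) _ h1 h2
  have hxx : x * x = x := by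
    have h4 : (f * (x * e)) * (f * (x * e)) = f * (x * e) := by
      simp only [mul_assoc]; rw [hp]
    rw [← h3]; exact h4
  have hse : e * f = x := by
    have := star_idem hxx
    rw [hx] at this ⊢
    rw [← this, star_star]
  rw [hse]; exact hxx

lemma idem_comm {e f : K} (he : e * e = e) (hf : f * f = f) : e * f = f * e := by
  have hef := idem_mul_idem he hf
  have hfe := idem_mul_idem hf he
  have he' : ∀ z : K, e * (e * z) = e * z := fun z => by rw [← mul_assoc, he]
  have hf' : ∀ z : K, f * (f * z) = f * z := fun z => by rw [← mul_assoc, hf]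
  have h1 : (e * f) * (f * e) * (e * f) = e * f := by
    have h := hef
    simp only [mul_assoc] at h ⊢
    simp only [hf', he']
    exact h
  have h2 : (f * e) * (e * f) * (f * e) = f * e := by
    have h := hfe
    simp only [mul_assoc] at h ⊢
    simp only [hf', he']
    exact h
  have h3 : f * e = star (e * f) := InverseSemigroup.star_unique (e * f) (f * e) h1 h2
  rw [h3, star_idem hef]

lemma star_mul (s t : K) : star (s * t) = star t * star s := by
  have c1 : (t * star t) * (star s * s) = (star s * s) * (t * star t) :=
    idem_comm (idem_ss t) (idem_ts s)
  have h1 : (s * t) * (star t * star s) * (s * t) = s * t := by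
    calc (s * t) * (star t * star s) * (s * t)
        = s * ((t * star t) * (star s * s)) * t := by simp only [mul_assoc]
      _ = s * ((star s * s) * (t * star t)) * t := by rw [c1]
      _ = (s * star s * s) * (t * star t * t) := by simp only [mul_assoc]
      _ = s * t := by rw [sss, sss]
  have h2 : (star t * star s) * (s * t) * (star t * star s) = star t * star s := by
    calc (star t * star s) * (s * t) * (star t * star s)
        = star t * ((star s * s) * (t * star t)) * star s := by simp only [mul_assoc]
      _ = star t * ((t * star t) * (star s * s)) * star s := by rw [← c1]
      _ = (star t * t * star t) * (star s * s * star s) := by simp only [mul_assoc]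
      _ = star t * star s := by rw [tst, tst]
  exact (InverseSemigroup.star_unique (s * t) (star t * star s) h1 h2).symm

lemma conj_idem (u : K) {e : K} (he : e * e = e) :
    (star u * (e * u)) * (star u * (e * u)) = star u * (e * u) := by
  have c1 : (u * star u) * e = e * (u * star u) := idem_comm (idem_ss u) he
  calc (star u * (e * u)) * (star u * (e * u))
      = star u * (e * ((u * star u) * e) * u) := by simp only [mul_assoc]
    _ = star u * (e * (e * (u * star u)) * u) := by rw [c1]
    _ = star u * ((e * e) * (u * star u * u)) := by simp only [mul_assoc]
    _ = star u * (e * u) := by rw [he, sss]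

lemma idem_swap (u : K) {e : K} (he : e * e = e) :
    e * u = u * (star u * (e * u)) := by
  have c1 : (u * star u) * e = e * (u * star u) := idem_comm (idem_ss u) he
  calc e * u = (e * (u * star u)) * u := by rw [mul_assoc e (u * star u) u, sss]
    _ = ((u * star u) * e) * u := by rw [c1]
    _ = u * (star u * (e * u)) := by simp only [mul_assoc]

lemma natLE_trans {a b c : K} (h1 : natLE a b) (h2 : natLE b c) : natLE a c := by
  obtain ⟨e, he, hab⟩ := h1
  obtain ⟨f, hf, hbc⟩ := h2
  exact ⟨f * e, idem_mul_idem hf he, by rw [hab, hbc, mul_assoc]⟩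

lemma natLE_antisymm {a b : K} (h1 : natLE a b) (h2 : natLE b a) : a = b := by
  obtain ⟨e, he, hab⟩ := h1
  obtain ⟨f, hf, hba⟩ := h2
  have key : b = a * (f * e) := by
    calc b = a * f := hba
      _ = (b * e) * f := by rw [← hab]
      _ = ((a * f) * e) * f := by rw [← hba]
      _ = a * (f * (e * f)) := by simp only [mul_assoc]
      _ = a * (f * (f * e)) := by rw [idem_comm he hf]
      _ = a * ((f * f) * e) := by simp only [mul_assoc]
      _ = a * (f * e) := by rw [hf]
  calc a = b * e := hab
    _ = (a * (f * e)) * e := by rw [← key]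
    _ = a * (f * (e * e)) := by simp only [mul_assoc]
    _ = a * (f * e) := by rw [he]
    _ = b := key.symm

lemma natLE_mul_left {a b : K} (c : K) (h : natLE a b) : natLE (c * a) (c * b) := by
  obtain ⟨e, he, hab⟩ := h
  exact ⟨e, he, by rw [hab, mul_assoc]⟩

lemma natLE_mul_right {a b : K} (c : K) (h : natLE a b) : natLE (a * c) (b * c) := by
  obtain ⟨e, he, hab⟩ := h
  refine ⟨star c * (e * c), conj_idem c he, ?_⟩
  rw [hab, mul_assoc, mul_assoc b c, ← idem_swap c he]

end ISAux

open ISAux in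
theorem auxForward (G : Type u) [InverseSemigroup G] (H : Type v) [InverseSemigroup H]
    (π : G → H)
    (r1 : ∀ s t : G, π s * π t * π (star t) = π (s * t) * π (star t))
    (r2 : ∀ s t : G, π (star s) * π s * π t = π (star s) * π (s * t))
    (r3 : ∀ s : G, π s * π (star s) * π s = π s) :
      (∀ s : G, π (star s) = star (π s)) ∧
      (∀ s t : G, natLE (π s * π t) (π (s * t))) ∧
      (∀ s t : G, natLE s t → natLE (π s) (π t)) := by
  have hstar : ∀ s : G, π (star s) = star (π s) := by
    intro s
    apply InverseSemigroup.star_unique (π s) (π (star s)) (r3 s)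
    have h := r3 (star s)
    rwa [ISAux.star_star] at h
  refine ⟨hstar, ?_, ?_⟩
  · intro s t
    refine ⟨star (π t) * π t, idem_ts (π t), ?_⟩
    have e2 : π s * π t * π (star t) * π t = π s * π t := by
      calc π s * π t * π (star t) * π t = π s * (π t * π (star t) * π t) := by
            simp only [mul_assoc]
        _ = π s * π t := by rw [r3]
    calc π s * π t = π s * π t * π (star t) * π t := e2.symm
      _ = π (s * t) * π (star t) * π t := by rw [r1]
      _ = π (s * t) * (star (π t) * π t) := by rw [hstar, mul_assoc]
  · rintro s t ⟨e, he, hse⟩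
    refine ⟨star (π s) * π s, idem_ts (π s), ?_⟩
    have hstar_s : star s = e * star t := by rw [hse, ISAux.star_mul, star_idem he]
    have hgs : t * star s * s = s := by
      rw [hstar_s, hse]
      calc t * (e * star t) * (t * e)
          = t * ((e * (star t * t)) * e) := by simp only [mul_assoc]
        _ = t * (((star t * t) * e) * e) := by rw [idem_comm he (idem_ts t)]
        _ = t * ((star t * t) * (e * e)) := by simp only [mul_assoc]
        _ = t * ((star t * t) * e) := by rw [he]
        _ = (t * star t * t) * e := by simp only [mul_assoc]
        _ = t * e := by rw [sss]
    have key : π (t * star s) * π s = π s := by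
      calc π (t * star s) * π s
          = π (t * star s) * (π s * π (star s) * π s) := by rw [r3]
        _ = (π (t * star s) * π s * π (star s)) * π s := by simp only [mul_assoc]
        _ = (π (t * star s * s) * π (star s)) * π s := by rw [r1]
        _ = (π s * π (star s)) * π s := by rw [hgs]
        _ = π s := r3 s
    have hr1' : π t * π (star s) * π s = π (t * star s) * π s := by
      have h := r1 t (star s)
      rwa [ISAux.star_star] at h
    calc π s = π (t * star s) * π s := key.symm
      _ = π t * π (star s) * π s := hr1'.symm
      _ = π t * (star (π s) * π s) := by rw [hstar, mul_assoc]

open ISAux in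
theorem auxBackward (G : Type u) [InverseSemigroup G] (H : Type v) [InverseSemigroup H]
    (π : G → H)
    (h1 : ∀ s : G, π (star s) = star (π s))
    (h2 : ∀ s t : G, natLE (π s * π t) (π (s * t)))
    (h3 : ∀ s t : G, natLE s t → natLE (π s) (π t)) :
    (∀ s t : G, π s * π t * π (star t) = π (s * t) * π (star t)) ∧
    (∀ s t : G, π (star s) * π s * π t = π (star s) * π (s * t)) ∧
    (∀ s : G, π s * π (star s) * π s = π s) := by
  refine ⟨?_, ?_, ?_⟩
  · intro s t
    apply natLE_antisymm
    · exact natLE_mul_right (π (star t)) (h2 s t)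
    · have step1 : natLE (π (s * t) * π (star t)) (π (s * t * star t)) := h2 (s * t) (star t)
      have step2 : natLE (s * t * star t) s := ⟨t * star t, idem_ss t, by rw [mul_assoc]⟩
      have step4 : natLE (π (s * t) * π (star t)) (π s) := natLE_trans step1 (h3 _ _ step2)
      have step5 := natLE_mul_right (π t * π (star t)) step4
      have habs : π (star t) * (π t * π (star t)) = π (star t) := by
        rw [h1]
        have h := tst (π t)
        simpa only [mul_assoc] using h
      have lhs_eq : π (s * t) * π (star t) * (π t * π (star t)) = π (s * t) * π (star t) := by
        rw [mul_assoc (π (s * t)), habs]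
      rw [lhs_eq, ← mul_assoc] at step5
      exact step5
  · intro s t
    apply natLE_antisymm
    · have := natLE_mul_left (π (star s)) (h2 s t)
      rwa [← mul_assoc] at this
    · have step1 : natLE (π (star s) * π (s * t)) (π (star s * (s * t))) := h2 (star s) (s * t)
      rw [show star s * (s * t) = star s * s * t from (mul_assoc _ _ _).symm] at step1
      have step2 : natLE (star s * s * t) t :=
        ⟨star t * (star s * s * t), conj_idem t (idem_ts s), idem_swap t (idem_ts s)⟩
      have step4 : natLE (π (star s) * π (s * t)) (π t) := natLE_trans step1 (h3 _ _ step2)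
      have step5 := natLE_mul_left (π (star s) * π s) step4
      have labs : π (star s) * π s * (π (star s) * π (s * t)) = π (star s) * π (s * t) := by
        rw [h1]
        calc star (π s) * π s * (star (π s) * π (s * t))
            = (star (π s) * π s * star (π s)) * π (s * t) := by simp only [mul_assoc]
          _ = star (π s) * π (s * t) := by rw [tst]
      rw [labs] at step5
      exact step5
  · intro s
    rw [h1]
    exact sss (π s)


theorem partialHom_iff (G : Type u) [InverseSemigroup G] (H : Type v) [InverseSemigroup H]
    (π : G → H) :
    IsPartialHom π ↔
      (∀ s : G, π (star s) = star (π s)) ∧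
      (∀ s t : G, natLE (π s * π t) (π (s * t))) ∧
      (∀ s t : G, natLE s t → natLE (π s) (π t)) := by
  constructor
  · rintro ⟨r1, r2, r3⟩
    exact auxForward G H π r1 r2 r3
  · rintro ⟨h1, h2, h3⟩
    obtain ⟨a, b, c⟩ := auxBackward G H π h1 h2 h3
    exact ⟨a, b, c⟩
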